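/- Let F be a hyperfield and S(F) the set of nonempty subsets of F that are finite hypersums a₁+⋯+aₙ of elements of F. Then (1) S(F) is closed under the addition A+B = ⋃_{a∈A,b∈B} a+b; and (2) if F is doubly-distributive, then S(F) is also closed under the multiplication A×B = {a×b | a∈A, b∈B}, and (S(F), +, ×) is a commutative semiring with additive identity {0} and multiplicative identity {1} in which multiplication distributes over addition. -/

import Mathlib

open Set

/-! ### Set-level operations induced by a hyperoperation -/

/-- The sum of two subsets with respect to a hyperaddition. -/
def sAddOf {R : Type*} (add : R → R → Set R) (X Y : Set R) : Set R :=
  ⋃ x ∈ X, ⋃ y ∈ Y, add x y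

/-- The hypersum of a list of elements (padded with a final `zero`). -/
def hypersum {R : Type*} (add : R → R → Set R) (zero : R) (l : List R) : Set R :=
  l.foldr (fun a X => sAddOf add {a} X) {zero}

/-- The collection of all finite (nonempty) hypersums of elements. -/
def sumSet {R : Type*} (add : R → R → Set R) : Set (Set R) :=
  {A | ∃ (a : R) (l : List R), A = l.foldr (fun x X => sAddOf add {x} X) ({a} : Set R)}

/-- The nonempty subsets of a type. -/
abbrev NSet (R : Type*) := {A : Set R // A.Nonempty}

/-- Image of a nonempty subset under a map. -/
def NSet.map {R S : Type*} (f : R → S) (A : NSet R) : NSet S := ⟨f '' A.1, A.2.image f⟩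

/-- Elementwise product of nonempty subsets. -/
def nsMul {R : Type*} (mul : R → R → R) (A B : NSet R) : NSet R :=
  ⟨Set.image2 mul A.1 B.1, A.2.image2 B.2⟩

/-! ### Hyperrings and hyperfields -/

/-- The data `(add, mul, zero, one)` forms a hyperring: `(R, add)` is a canonical
hypergroup, `(R, mul)` is a commutative unital monoid, and multiplication
distributes over hyperaddition with `zero` absorbing. -/
structure IsHyperring {R : Type*} (add : R → R → Set R) (mul : R → R → R)
    (zero one : R) : Prop where
  add_nonempty : ∀ a b, (add a b).Nonempty
  add_comm : ∀ a b, add a b = add b a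
  add_zero : ∀ a, add a zero = {a}
  exists_neg : ∀ a, ∃! b, zero ∈ add a b
  add_assoc : ∀ a b c, sAddOf add (add a b) {c} = sAddOf add {a} (add b c)
  reversible : ∀ a b b' c, zero ∈ add b b' → (a ∈ add b c ↔ c ∈ add a b')
  mul_comm : ∀ a b, mul a b = mul b a
  mul_assoc : ∀ a b c, mul (mul a b) c = mul a (mul b c)
  mul_one : ∀ a, mul a one = a
  mul_zero : ∀ a, mul a zero = zero
  distrib : ∀ a b c, mul a '' add b c = add (mul a b) (mul a c)

/-- The data forms a hyperfield: a hyperring in which every nonzero element is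
a multiplicative unit. -/
structure IsHyperfield {R : Type*} (add : R → R → Set R) (mul : R → R → R)
    (zero one : R) extends IsHyperring add mul zero one : Prop where
  one_ne_zero : one ≠ zero
  inv : ∀ a, a ≠ zero → ∃ b, mul a b = one

/-- A (bundled) hyperring structure on `R`. -/
structure Hyperring (R : Type*) where
  add : R → R → Set R
  mul : R → R → R
  zero : R
  one : R
  isHyperring : IsHyperring add mul zero one

/-- The hyperadditive inverse. -/
noncomputable def Hyperring.neg {R : Type*} (H : Hyperring R) (a : R) : R :=
  (H.isHyperring.exists_neg a).exists.choose

/-- A unit of a hyperring. -/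
def Hyperring.IsUnit {R : Type*} (H : Hyperring R) (a : R) : Prop :=
  ∃ b, H.mul a b = H.one

/-- A (bundled) hyperfield structure on `R`. -/
structure Hyperfield (R : Type*) extends Hyperring R where
  one_ne_zero : one ≠ zero
  inv : ∀ a, a ≠ zero → ∃ b, mul a b = one

/-- A homomorphism of hyperrings (with respect to unbundled data):
`f 0 = 0`, `f 1 = 1`, `f(a+b) ⊆ f a + f b` and `f(a×b) = f a × f b`. -/
structure IsHyperringHom {R S : Type*}
    (addR : R → R → Set R) (mulR : R → R → R) (zeroR oneR : R)
    (addS : S → S → Set S) (mulS : S → S → S) (zeroS oneS : S)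
    (f : R → S) : Prop where
  map_zero : f zeroR = zeroS
  map_one : f oneR = oneS
  map_add : ∀ a b, f '' addR a b ⊆ addS (f a) (f b)
  map_mul : ∀ a b, f (mulR a b) = mulS (f a) (f b)

/-- A strict homomorphism of hyperrings: as above, but `f(a+b) = f a + f b`. -/
structure IsStrictHyperringHom {R S : Type*}
    (addR : R → R → Set R) (mulR : R → R → R) (zeroR oneR : R)
    (addS : S → S → Set S) (mulS : S → S → S) (zeroS oneS : S)
    (f : R → S) : Prop where
  map_zero : f zeroR = zeroS
  map_one : f oneR = oneS
  map_add : ∀ a b, f '' addR a b = addS (f a) (f b)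
  map_mul : ∀ a b, f (mulR a b) = mulS (f a) (f b)

/-! ### Fuzzy rings -/

/-- The data of a fuzzy ring: two binary operations, neutral elements,
a distinguished element `eps` and a set `null` of null elements. -/
structure FuzzyData (K : Type*) where
  add : K → K → K
  mul : K → K → K
  zero : K
  one : K
  eps : K
  null : Set K

namespace FuzzyData

/-- Multiplicative units. -/
def IsUnit {K : Type*} (D : FuzzyData K) (a : K) : Prop := ∃ b, D.mul a b = D.one

/-- Sum of a list of elements. -/
def sum {K : Type*} (D : FuzzyData K) (l : List K) : K := l.foldr D.add D.zero

/-- A fuzzy ring is field-like if for each pair of units `a, b` there exists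
`c ∈ K^× ∪ {0}` with `a + b + c` null. -/
def FieldLike {K : Type*} (D : FuzzyData K) : Prop :=
  ∀ a b, D.IsUnit a → D.IsUnit b →
    ∃ c, (D.IsUnit c ∨ c = D.zero) ∧ D.add (D.add a b) c ∈ D.null

end FuzzyData

/-- Dress's fuzzy ring axioms (FR0)–(FR7). -/
structure IsFuzzyRing {K : Type*} (D : FuzzyData K) : Prop where
  add_comm : ∀ a b, D.add a b = D.add b a
  add_assoc : ∀ a b c, D.add (D.add a b) c = D.add a (D.add b c)
  add_zero : ∀ a, D.add a D.zero = a
  mul_comm : ∀ a b, D.mul a b = D.mul b a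
  mul_assoc : ∀ a b c, D.mul (D.mul a b) c = D.mul a (D.mul b c)
  mul_one : ∀ a, D.mul a D.one = a
  zero_mul : ∀ a, D.mul D.zero a = D.zero
  unit_distrib : ∀ a b c, D.IsUnit a → D.mul a (D.add b c) = D.add (D.mul a b) (D.mul a c)
  eps_sq : D.mul D.eps D.eps = D.one
  null_add : ∀ a ∈ D.null, ∀ b ∈ D.null, D.add a b ∈ D.null
  mul_null : ∀ (a : K), ∀ b ∈ D.null, D.mul a b ∈ D.null
  zero_mem_null : D.zero ∈ D.null
  one_not_mem_null : D.one ∉ D.null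
  fr5 : ∀ a, D.IsUnit a → (D.add D.one a ∈ D.null ↔ a = D.eps)
  fr6 : ∀ a b c d, D.add a b ∈ D.null → D.add c d ∈ D.null →
    D.add (D.mul a c) (D.mul D.eps (D.mul b d)) ∈ D.null
  fr7 : ∀ a b c d, D.add a (D.mul b (D.add c d)) ∈ D.null →
    D.add (D.add a (D.mul b c)) (D.mul b d) ∈ D.null

/-- A weak morphism of fuzzy rings: a map inducing a group homomorphism on units
which preserves null sums of units. -/
structure IsWeakMorphism {K L : Type*} (D : FuzzyData K) (E : FuzzyData L)
    (f : K → L) : Prop where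
  map_unit : ∀ a, D.IsUnit a → E.IsUnit (f a)
  map_one : f D.one = E.one
  map_mul : ∀ a b, D.IsUnit a → D.IsUnit b → f (D.mul a b) = E.mul (f a) (f b)
  map_null : ∀ l : List K, (∀ a ∈ l, D.IsUnit a) →
    D.sum l ∈ D.null → E.sum (l.map f) ∈ E.null

/-- A strong morphism of fuzzy rings. -/
structure IsStrongMorphism {K L : Type*} (D : FuzzyData K) (E : FuzzyData L)
    (f : K → L) : Prop where
  map_one : f D.one = E.one
  map_zero : f D.zero = E.zero
  map_mul : ∀ a b, D.IsUnit a → f (D.mul a b) = E.mul (f a) (f b)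
  map_null : ∀ l : List (K × K),
    D.sum (l.map fun p => D.mul p.1 p.2) ∈ D.null →
    E.sum (l.map fun p => E.mul (f p.1) (f p.2)) ∈ E.null

/-! ### The functor 𝓕 from hyperrings to fuzzy rings -/

/-- The fuzzy-ring data `𝓕(R)` associated to a hyperring `R`: the nonempty
subsets of `R` with subset addition and multiplication, `ε = {-1}`, and null
elements the subsets containing `0`. -/
noncomputable def Hyperring.Fuzzy {R : Type*} (H : Hyperring R) : FuzzyData (NSet R) where
  add A B := ⟨sAddOf H.add A.1 B.1, by
    obtain ⟨a, ha⟩ := A.2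
    obtain ⟨b, hb⟩ := B.2
    obtain ⟨c, hc⟩ := H.isHyperring.add_nonempty a b
    exact ⟨c, Set.mem_biUnion ha (Set.mem_biUnion hb hc)⟩⟩
  mul A B := nsMul H.mul A B
  zero := ⟨{H.zero}, Set.singleton_nonempty _⟩
  one := ⟨{H.one}, Set.singleton_nonempty _⟩
  eps := ⟨{H.neg H.one}, Set.singleton_nonempty _⟩
  null := {A | H.zero ∈ A.1}

/-! ### The functor 𝒢 from field-like fuzzy rings to hyperfields -/

/-- The carrier `K^× ∪ {0}` of `𝒢(K)`. -/
def GCarrier {K : Type*} (D : FuzzyData K) := {a : K // D.IsUnit a ∨ a = D.zero}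

/-- The hyperaddition of `𝒢(K)`: `a ⊕ b = {c : a + b + ε c ∈ K₀}`. -/
def Gadd {K : Type*} (D : FuzzyData K) (a b : GCarrier D) : Set (GCarrier D) :=
  {c | D.add (D.add a.1 b.1) (D.mul D.eps c.1) ∈ D.null}

/-- The zero element of `𝒢(K)`. -/
def Gzero {K : Type*} (D : FuzzyData K) : GCarrier D := ⟨D.zero, Or.inr rfl⟩

/-- The one element of `𝒢(K)`. -/
def Gone {K : Type*} {D : FuzzyData K} (h : IsFuzzyRing D) : GCarrier D :=
  ⟨D.one, Or.inl ⟨D.one, h.mul_one D.one⟩⟩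

/-- The multiplication of `𝒢(K)`. -/
def Gmul {K : Type*} {D : FuzzyData K} (h : IsFuzzyRing D) (a b : GCarrier D) :
    GCarrier D :=
  ⟨D.mul a.1 b.1, by
    rcases b.2 with hb | hb
    · rcases a.2 with ha | ha
      · left
        obtain ⟨a', ha'⟩ := ha
        obtain ⟨b', hb'⟩ := hb
        refine ⟨D.mul a' b', ?_⟩
        rw [h.mul_assoc a.1 b.1 (D.mul a' b'), ← h.mul_assoc b.1 a' b',
          h.mul_comm b.1 a', h.mul_assoc a' b.1 b', hb', h.mul_one, ha']
      · right; rw [ha, h.zero_mul]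
    · right; rw [hb, h.mul_comm, h.zero_mul]⟩

open Classical in
/-- The extension of a weak morphism to `𝒢(K) → 𝒢(L)`, sending `0` to `0`. -/
noncomputable def Gmap {K L : Type*} {D : FuzzyData K} {E : FuzzyData L} {f : K → L}
    (hf : IsWeakMorphism D E f) (a : GCarrier D) : GCarrier E :=
  if h : a.1 = D.zero then Gzero E
  else ⟨f a.1, Or.inl (hf.map_unit a.1 (a.2.resolve_right h))⟩

/-- The canonical map `F → 𝒢(𝓕(F))`, `x ↦ {x}`, for a hyperfield `F`. -/
noncomputable def toG {R : Type*} (F : Hyperfield R) (x : R) :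
    GCarrier F.toHyperring.Fuzzy :=
  ⟨⟨{x}, Set.singleton_nonempty x⟩, by
    by_cases hx : x = F.toHyperring.zero
    · exact Or.inr (by subst hx; rfl)
    · obtain ⟨y, hy⟩ := F.inv x hx
      exact Or.inl ⟨⟨{y}, Set.singleton_nonempty y⟩, by
        apply Subtype.ext
        show Set.image2 F.toHyperring.mul {x} {y} = {F.toHyperring.one}
        rw [Set.image2_singleton, hy]⟩⟩

/-! ### Doubly-distributive hyperfields -/

/-- A hyperfield is doubly-distributive if `(a+b)(c+d) = ac + ad + bc + bd`. -/
def Hyperfield.DoublyDistributive {R : Type*} (F : Hyperfield R) : Prop :=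
  ∀ a b c d : R,
    Set.image2 F.mul (F.add a b) (F.add c d) =
      sAddOf F.add (sAddOf F.add (F.add (F.mul a c) (F.mul a d)) {F.mul b c})
        {F.mul b d}

/-! ### The tropical hyperfield of a totally ordered abelian group, and K_Γ -/

/-- The hyperaddition of the hyperfield `H_Γ` on `Γ ∪ {0}`. -/
def tropAdd (Γ : Type*) [CommGroup Γ] [LinearOrder Γ] [IsOrderedMonoid Γ] (x y : WithZero Γ) :
    Set (WithZero Γ) :=
  if x = y then Set.Iic x else {max x y}

/-- The underlying set of the fuzzy ring `K_Γ`: all singletons and all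
intervals `[0, a]` in `Γ ∪ {0}`. -/
def KgSet (Γ : Type*) [CommGroup Γ] [LinearOrder Γ] [IsOrderedMonoid Γ] : Set (Set (WithZero Γ)) :=
  {A | (∃ a : WithZero Γ, A = {a}) ∨ ∃ a : WithZero Γ, A = Set.Iic a}

open Classical in
/-- The casewise addition of `K_Γ`. -/
noncomputable def KgAdd (Γ : Type*) [CommGroup Γ] [LinearOrder Γ] [IsOrderedMonoid Γ]
    (A B : Set (WithZero Γ)) : Set (WithZero Γ) :=
  if h : ∃ a b : WithZero Γ, A = {a} ∧ B = {b} then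
    if h.choose = h.choose_spec.choose then Set.Iic h.choose
    else {max h.choose h.choose_spec.choose}
  else if h : ∃ a b : WithZero Γ, A = {a} ∧ B = Set.Iic b then
    if h.choose ≤ h.choose_spec.choose then Set.Iic h.choose_spec.choose
    else {h.choose}
  else if h : ∃ a b : WithZero Γ, A = Set.Iic a ∧ B = {b} then
    if h.choose_spec.choose ≤ h.choose then Set.Iic h.choose
    else {h.choose_spec.choose}
  else if h : ∃ a b : WithZero Γ, A = Set.Iic a ∧ B = Set.Iic b then
    Set.Iic (max h.choose h.choose_spec.choose)
  else ∅

/-- The carrier of `K_Γ` as a subtype. -/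
def Kg (Γ : Type*) [CommGroup Γ] [LinearOrder Γ] [IsOrderedMonoid Γ] := {A : Set (WithZero Γ) // A ∈ KgSet Γ}

/-- The inclusion `K_Γ → 𝓕(H_Γ)`. -/
noncomputable def KgToF (Γ : Type*) [CommGroup Γ] [LinearOrder Γ] [IsOrderedMonoid Γ] (A : Kg Γ) : NSet (WithZero Γ) :=
  ⟨A.1, by
    rcases A.2 with ⟨a, h⟩ | ⟨a, h⟩
    · rw [h]; exact Set.singleton_nonempty a
    · rw [h]; exact ⟨a, Set.mem_Iic.2 le_rfl⟩⟩

/-! ### Grassmann–Plücker functions -/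

/-- A Grassmann–Plücker function of rank `r+1` on `E` with coefficients in a
hyperfield `F`. -/
noncomputable def IsGPHyper {R E : Type*} [Fintype E] (F : Hyperfield R) (r : ℕ)
    (φ : (Fin (r + 1) → E) → R) : Prop :=
  (∃ x, φ x ≠ F.zero) ∧
  (∀ x : Fin (r + 1) → E, ∀ i j : Fin (r + 1), i ≠ j → x i = x j → φ x = F.zero) ∧
  (∀ (x : Fin (r + 1) → E) (σ : Equiv.Perm (Fin (r + 1))), Equiv.Perm.sign σ = -1 →
    φ (x ∘ σ) = F.toHyperring.neg (φ x)) ∧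
  (∀ (x : Fin (r + 2) → E) (y : Fin r → E),
    F.zero ∈ hypersum F.add F.zero
      ((List.finRange (r + 2)).map fun (k : Fin (r + 2)) =>
        if Even (k : ℕ)
        then F.toHyperring.neg (F.mul (φ (x ∘ k.succAbove)) (φ (Fin.cons (x k) y)))
        else F.mul (φ (x ∘ k.succAbove)) (φ (Fin.cons (x k) y))))

/-- A Grassmann–Plücker function of rank `r+1` on `E` with coefficients in a
fuzzy ring (given by its data `D`). -/
def IsGPFuzzy {K E : Type*} [Fintype E] (D : FuzzyData K) (r : ℕ)
    (φ : (Fin (r + 1) → E) → K) : Prop :=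
  (∀ x, D.IsUnit (φ x) ∨ φ x = D.zero) ∧
  (∃ x, φ x ≠ D.zero) ∧
  (∀ x : Fin (r + 1) → E, ∀ i j : Fin (r + 1), i ≠ j → x i = x j → φ x = D.zero) ∧
  (∀ (x : Fin (r + 1) → E) (σ : Equiv.Perm (Fin (r + 1))), Equiv.Perm.sign σ = -1 →
    φ (x ∘ σ) = D.mul D.eps (φ x)) ∧
  (∀ (x : Fin (r + 2) → E) (y : Fin r → E),
    D.sum ((List.finRange (r + 2)).map fun (k : Fin (r + 2)) =>
      if Even (k : ℕ)
      then D.mul D.eps (D.mul (φ (x ∘ k.succAbove)) (φ (Fin.cons (x k) y)))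
      else D.mul (φ (x ∘ k.succAbove)) (φ (Fin.cons (x k) y))) ∈ D.null)

/-! Every member of `S(F)` is a hypersum `x₁ + (x₂ + ⋯ + (xₙ + {a}))`, so facts about `S(F)` are
proved by peeling off the first summand. The set sum inherits commutativity and associativity
from the hyperaddition, which gives closure under addition. Double distributivity enters in one
place: for `A = x + X ∈ S(F)` it expands `(x + y)(c + d)`, `y ∈ X`, and yields by induction
`A (c + d) = A c + A d`. Since `B + C` is a union of hypersums `c + d`, this gives
`A (B + C) = A B + A C`, and closure under products follows by induction on `B`. -/

section SetSum

variable {R : Type*} {add : R → R → Set R}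

theorem mem_sAddOf {X Y : Set R} {t : R} :
    t ∈ sAddOf add X Y ↔ ∃ x ∈ X, ∃ y ∈ Y, t ∈ add x y := by
  simp [sAddOf]

theorem sAddOf_singleton_singleton (a b : R) : sAddOf add {a} {b} = add a b := by
  simp [sAddOf]

theorem sAddOf_singleton_left (x : R) (X : Set R) :
    sAddOf add {x} X = ⋃ y ∈ X, add x y := by
  simp [sAddOf]

theorem sAddOf_iUnion₂_left {ι : Type*} (s : Set ι) (P : ι → Set R) (Q : Set R) :
    sAddOf add (⋃ i ∈ s, P i) Q = ⋃ i ∈ s, sAddOf add (P i) Q := by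
  ext t
  simp only [mem_sAddOf, Set.mem_iUnion]
  tauto

theorem sAddOf_iUnion₂_right {ι : Type*} (P : Set R) (s : Set ι) (Q : ι → Set R) :
    sAddOf add P (⋃ i ∈ s, Q i) = ⋃ i ∈ s, sAddOf add P (Q i) := by
  ext t
  simp only [mem_sAddOf, Set.mem_iUnion]
  tauto

theorem sAddOf_comm (hc : ∀ a b : R, add a b = add b a) (X Y : Set R) :
    sAddOf add X Y = sAddOf add Y X := by
  ext t
  simp only [mem_sAddOf]
  constructor <;> rintro ⟨x, hx, y, hy, ht⟩ <;> exact ⟨y, hy, x, hx, hc x y ▸ ht⟩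

theorem mem_sAddOf_sAddOf_left {X Y Z : Set R} {t : R} :
    t ∈ sAddOf add (sAddOf add X Y) Z ↔
      ∃ x ∈ X, ∃ y ∈ Y, ∃ z ∈ Z, t ∈ sAddOf add (add x y) {z} := by
  simp only [mem_sAddOf, Set.mem_singleton_iff]
  aesop

theorem mem_sAddOf_sAddOf_right {X Y Z : Set R} {t : R} :
    t ∈ sAddOf add X (sAddOf add Y Z) ↔
      ∃ x ∈ X, ∃ y ∈ Y, ∃ z ∈ Z, t ∈ sAddOf add {x} (add y z) := by
  simp only [mem_sAddOf, Set.mem_singleton_iff]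
  aesop

theorem sAddOf_assoc (ha : ∀ a b c : R, sAddOf add (add a b) {c} = sAddOf add {a} (add b c))
    (X Y Z : Set R) :
    sAddOf add (sAddOf add X Y) Z = sAddOf add X (sAddOf add Y Z) := by
  ext t
  simp only [mem_sAddOf_sAddOf_left, mem_sAddOf_sAddOf_right, ha]

theorem sAddOf_sAddOf_sAddOf_comm (hc : ∀ a b : R, add a b = add b a)
    (ha : ∀ a b c : R, sAddOf add (add a b) {c} = sAddOf add {a} (add b c))
    (P Q S T : Set R) :
    sAddOf add (sAddOf add P Q) (sAddOf add S T)
      = sAddOf add (sAddOf add P S) (sAddOf add Q T) := by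
  rw [sAddOf_assoc ha, ← sAddOf_assoc ha Q, sAddOf_comm hc Q S, sAddOf_assoc ha S,
    ← sAddOf_assoc ha P]

theorem sAddOf_singleton_zero {zero : R} (h0 : ∀ a : R, add a zero = {a}) (X : Set R) :
    sAddOf add X {zero} = X := by
  simp [sAddOf, h0]

theorem image_sAddOf {f : R → R} (hf : ∀ x y, f '' add x y = add (f x) (f y)) (X Y : Set R) :
    f '' sAddOf add X Y = sAddOf add (f '' X) (f '' Y) := by
  simp only [sAddOf, Set.image_iUnion₂, hf, Set.biUnion_image]

end SetSum

section SumSet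

variable {R : Type*} {add : R → R → Set R}

theorem singleton_mem_sumSet (a : R) : {a} ∈ sumSet add :=
  ⟨a, [], rfl⟩

theorem sAddOf_singleton_mem_sumSet (x : R) {X : Set R} (hX : X ∈ sumSet add) :
    sAddOf add {x} X ∈ sumSet add := by
  obtain ⟨a, l, rfl⟩ := hX
  exact ⟨a, x :: l, rfl⟩

theorem sumSet_induction {P : Set R → Prop} (singleton : ∀ a : R, P {a})
    (cons : ∀ (x : R) (X : Set R), X ∈ sumSet add → P X → P (sAddOf add {x} X)) :
    ∀ A ∈ sumSet add, P A := by
  rintro A ⟨a, l, rfl⟩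
  induction l with
  | nil => exact singleton a
  | cons x l ih => exact cons x _ ⟨a, l, rfl⟩ ih

theorem nonempty_of_mem_sumSet (hne : ∀ a b : R, (add a b).Nonempty) :
    ∀ A ∈ sumSet add, A.Nonempty := by
  refine sumSet_induction Set.singleton_nonempty fun x X _ ⟨y, hy⟩ => ?_
  obtain ⟨t, ht⟩ := hne x y
  exact ⟨t, mem_sAddOf.2 ⟨x, rfl, y, hy, ht⟩⟩

theorem sAddOf_mem_sumSet (ha : ∀ a b c : R, sAddOf add (add a b) {c} = sAddOf add {a} (add b c)) :
    ∀ A ∈ sumSet add, ∀ B ∈ sumSet add, sAddOf add A B ∈ sumSet add := by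
  refine sumSet_induction ?_ fun x X _ ih B hB => ?_
  · rintro a B ⟨b, l, rfl⟩
    exact ⟨b, a :: l, rfl⟩
  · rw [sAddOf_assoc ha]
    exact sAddOf_singleton_mem_sumSet x (ih B hB)

theorem image_mem_sumSet {f : R → R} (hf : ∀ x y, f '' add x y = add (f x) (f y)) :
    ∀ A ∈ sumSet add, f '' A ∈ sumSet add := by
  refine sumSet_induction (fun a => ?_) fun x X _ ih => ?_
  · rw [Set.image_singleton]
    exact singleton_mem_sumSet _
  · rw [image_sAddOf hf, Set.image_singleton]
    exact sAddOf_singleton_mem_sumSet _ ih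

end SumSet

section Multiplication

variable {R : Type*} {add : R → R → Set R} {mul : R → R → R}

theorem image_mul_right_add (hmc : ∀ a b : R, mul a b = mul b a)
    (hd : ∀ a b c : R, mul a '' add b c = add (mul a b) (mul a c)) (b x y : R) :
    (mul · b) '' add x y = add (mul x b) (mul y b) := by
  simp only [hmc _ b, hd]

theorem image2_sAddOf_singleton_right (hmc : ∀ a b : R, mul a b = mul b a)
    (hd : ∀ a b c : R, mul a '' add b c = add (mul a b) (mul a c)) (X Y : Set R) (b : R) :
    Set.image2 mul (sAddOf add X Y) {b}
      = sAddOf add (Set.image2 mul X {b}) (Set.image2 mul Y {b}) := by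
  simp only [Set.image2_singleton_right]
  exact image_sAddOf (image_mul_right_add hmc hd b) X Y

theorem image2_add_of_mem_sumSet (hc : ∀ a b : R, add a b = add b a)
    (ha : ∀ a b c : R, sAddOf add (add a b) {c} = sAddOf add {a} (add b c))
    (hmc : ∀ a b : R, mul a b = mul b a)
    (hd : ∀ a b c : R, mul a '' add b c = add (mul a b) (mul a c))
    (hdd : ∀ a b c d : R, Set.image2 mul (add a b) (add c d) =
      sAddOf add (sAddOf add (add (mul a c) (mul a d)) {mul b c}) {mul b d}) (c d : R) :
    ∀ A ∈ sumSet add,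
      Set.image2 mul A (add c d) = sAddOf add (Set.image2 mul A {c}) (Set.image2 mul A {d}) := by
  refine sumSet_induction (fun a => ?_) fun x X _ ih => ?_
  · simp only [Set.image2_singleton_left, Set.image_singleton, hd, sAddOf_singleton_singleton]
  have expand : ∀ y, Set.image2 mul (add x y) (add c d)
      = sAddOf add (add (mul x c) (mul x d)) (mul y '' add c d) := fun y => by
    rw [hdd, sAddOf_assoc ha, sAddOf_singleton_singleton, hd]
  calc Set.image2 mul (sAddOf add {x} X) (add c d)
      = ⋃ y ∈ X, sAddOf add (add (mul x c) (mul x d)) (mul y '' add c d) := by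
        simp only [sAddOf_singleton_left, Set.image2_iUnion₂_left, expand]
    _ = sAddOf add (sAddOf add {mul x c} {mul x d})
          (sAddOf add (Set.image2 mul X {c}) (Set.image2 mul X {d})) := by
        rw [← sAddOf_iUnion₂_right, Set.iUnion_image_left, ih, sAddOf_singleton_singleton]
    _ = sAddOf add (sAddOf add {mul x c} (Set.image2 mul X {c}))
          (sAddOf add {mul x d} (Set.image2 mul X {d})) :=
        sAddOf_sAddOf_sAddOf_comm hc ha _ _ _ _
    _ = sAddOf add (Set.image2 mul (sAddOf add {x} X) {c})
          (Set.image2 mul (sAddOf add {x} X) {d}) := by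
        rw [image2_sAddOf_singleton_right hmc hd, image2_sAddOf_singleton_right hmc hd,
          Set.image2_singleton, Set.image2_singleton]

theorem image2_sAddOf_of_mem_sumSet (hc : ∀ a b : R, add a b = add b a)
    (ha : ∀ a b c : R, sAddOf add (add a b) {c} = sAddOf add {a} (add b c))
    (hmc : ∀ a b : R, mul a b = mul b a)
    (hd : ∀ a b c : R, mul a '' add b c = add (mul a b) (mul a c))
    (hdd : ∀ a b c d : R, Set.image2 mul (add a b) (add c d) =
      sAddOf add (sAddOf add (add (mul a c) (mul a d)) {mul b c}) {mul b d})
    {A : Set R} (hA : A ∈ sumSet add) (X Y : Set R) :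
    Set.image2 mul A (sAddOf add X Y)
      = sAddOf add (Set.image2 mul A X) (Set.image2 mul A Y) := by
  calc Set.image2 mul A (⋃ x ∈ X, ⋃ y ∈ Y, add x y)
      = ⋃ x ∈ X, ⋃ y ∈ Y, sAddOf add (Set.image2 mul A {x}) (Set.image2 mul A {y}) := by
        simp only [Set.image2_iUnion₂_right, image2_add_of_mem_sumSet hc ha hmc hd hdd _ _ A hA]
    _ = sAddOf add (Set.image2 mul A X) (Set.image2 mul A Y) := by
        simp only [← sAddOf_iUnion₂_left, ← sAddOf_iUnion₂_right, Set.image2_singleton_right,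
          Set.iUnion_image_right]

theorem image2_mem_sumSet (hc : ∀ a b : R, add a b = add b a)
    (ha : ∀ a b c : R, sAddOf add (add a b) {c} = sAddOf add {a} (add b c))
    (hmc : ∀ a b : R, mul a b = mul b a)
    (hd : ∀ a b c : R, mul a '' add b c = add (mul a b) (mul a c))
    (hdd : ∀ a b c d : R, Set.image2 mul (add a b) (add c d) =
      sAddOf add (sAddOf add (add (mul a c) (mul a d)) {mul b c}) {mul b d})
    {A : Set R} (hA : A ∈ sumSet add) : ∀ B ∈ sumSet add, Set.image2 mul A B ∈ sumSet add := by
  refine sumSet_induction (fun b => ?_) fun y Y _ ih => ?_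
  · rw [Set.image2_singleton_right]
    exact image_mem_sumSet (image_mul_right_add hmc hd b) A hA
  · rw [image2_sAddOf_of_mem_sumSet hc ha hmc hd hdd hA, Set.image2_singleton_right]
    exact sAddOf_mem_sumSet ha _ (image_mem_sumSet (image_mul_right_add hmc hd y) A hA) _ ih

end Multiplication

/-- Let `F` be a hyperfield and `S(F)` the set of nonempty subsets of
`F` that are finite hypersums of elements of `F`. Then (1) `S(F)` is closed under the
subset addition; and (2) if `F` is doubly-distributive, `S(F)` is closed under the
elementwise multiplication and `(S(F), +, ×)` is a commutative semiring with additive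
identity `{0}` and multiplicative identity `{1}`. -/
theorem sumSet_semiring {R : Type*} (F : Hyperfield R) :
    (∀ A ∈ sumSet F.add, ∀ B ∈ sumSet F.add, sAddOf F.add A B ∈ sumSet F.add) ∧
    (F.DoublyDistributive →
      (∀ A ∈ sumSet F.add, ∀ B ∈ sumSet F.add,
        Set.image2 F.mul A B ∈ sumSet F.add) ∧
      ({F.zero} ∈ sumSet F.add) ∧ ({F.one} ∈ sumSet F.add) ∧
      (∀ A ∈ sumSet F.add, ∀ B ∈ sumSet F.add,
        sAddOf F.add A B = sAddOf F.add B A) ∧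
      (∀ A ∈ sumSet F.add, ∀ B ∈ sumSet F.add, ∀ C ∈ sumSet F.add,
        sAddOf F.add (sAddOf F.add A B) C = sAddOf F.add A (sAddOf F.add B C)) ∧
      (∀ A ∈ sumSet F.add, sAddOf F.add A {F.zero} = A) ∧
      (∀ A ∈ sumSet F.add, ∀ B ∈ sumSet F.add,
        Set.image2 F.mul A B = Set.image2 F.mul B A) ∧
      (∀ A ∈ sumSet F.add, ∀ B ∈ sumSet F.add, ∀ C ∈ sumSet F.add,
        Set.image2 F.mul (Set.image2 F.mul A B) C
          = Set.image2 F.mul A (Set.image2 F.mul B C)) ∧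
      (∀ A ∈ sumSet F.add, Set.image2 F.mul A {F.one} = A) ∧
      (∀ A ∈ sumSet F.add, Set.image2 F.mul A {F.zero} = {F.zero}) ∧
      (∀ A ∈ sumSet F.add, ∀ B ∈ sumSet F.add, ∀ C ∈ sumSet F.add,
        Set.image2 F.mul A (sAddOf F.add B C)
          = sAddOf F.add (Set.image2 F.mul A B) (Set.image2 F.mul A C))) := by
  obtain ⟨hne, hc, h0, -, ha, -, hmc, hmassoc, h1, hm0, hd⟩ := F.isHyperring
  refine ⟨sAddOf_mem_sumSet ha, fun hdd => ⟨fun A hA => image2_mem_sumSet hc ha hmc hd hdd hA,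
    singleton_mem_sumSet _, singleton_mem_sumSet _,
    fun A _ B _ => sAddOf_comm hc A B,
    fun A _ B _ C _ => sAddOf_assoc ha A B C,
    fun A _ => sAddOf_singleton_zero h0 A,
    fun A _ B _ => Set.image2_comm hmc,
    fun A _ B _ C _ => Set.image2_assoc hmassoc,
    fun A _ => by simp [Set.image2_singleton_right, h1],
    fun A hA => ?_,
    fun A hA B _ C _ => image2_sAddOf_of_mem_sumSet hc ha hmc hd hdd hA B C⟩⟩
  simp only [Set.image2_singleton_right, hm0]
  exact (nonempty_of_mem_sumSet hne A hA).image_const _
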